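/- Let (S,≤) be a partially ordered set, let S' be an isolated suborder of (S,≤) such that ⊤_{S'} has a least bottleneck, let Q be the set of equivalence classes of ≡_{S'} partially ordered by ≤_{S'}, and let C ⊆ S. Then: (1) if C ∩ S' ≠ ∅, C is a closure system of (S,≤) if and only if C ∩ S' is a nonempty preclosure system of S' with the induced order and {{c} | c ∈ C \ S'} ∪ {S'} is a closure system of (Q, ≤_{S'}); (2) if C ∩ S' = ∅, C is a closure system of (S,≤) if and only if {{c} | c ∈ C} is a closure system of (Q, ≤_{S'}). -/

import Mathlib

/-- `S'` is an *isolated suborder* of the partially ordered set. -/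
def IsIsolatedSuborder {α : Type*} [PartialOrder α] (S' : Set α) : Prop :=
  ∃ b t, IsLeast S' b ∧ IsGreatest S' t ∧
    ∀ x ∉ S', ∀ y ∈ S', (y ≤ x → t ≤ x) ∧ (x ≤ y → x ≤ b)

/-- The equivalence class of `x` under `≡_{S'}`. -/
def eqClass {α : Type*} (S' : Set α) (x : α) : Set α :=
  {y | (x ∈ S' ∧ y ∈ S') ∨ (x ∉ S' ∧ y = x)}

/-- The set of equivalence classes of `≡_{S'}`. -/
def quotClasses {α : Type*} (S' : Set α) : Set (Set α) :=
  Set.range (eqClass S')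

/-- The quotient relation on equivalence classes. -/
def qle {α : Type*} [PartialOrder α] (A B : Set α) : Prop :=
  ∃ a ∈ A, ∃ b ∈ B, a ≤ b

/-- `b` is the least element of `A` with respect to the relation `r`. -/
def IsLeastRel {β : Type*} (r : β → β → Prop) (A : Set β) (b : β) : Prop :=
  b ∈ A ∧ ∀ y ∈ A, r b y

/-- `t` is the greatest element of `A` with respect to the relation `r`. -/
def IsGreatestRel {β : Type*} (r : β → β → Prop) (A : Set β) (t : β) : Prop :=
  t ∈ A ∧ ∀ y ∈ A, r y t

/-- `S'` is an isolated suborder of the ordered set with carrier `carrier` and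
order relation `r`. -/
def IsIsolatedSuborderRel {β : Type*} (r : β → β → Prop) (carrier S' : Set β) : Prop :=
  S' ⊆ carrier ∧ ∃ b t, IsLeastRel r S' b ∧ IsGreatestRel r S' t ∧
    ∀ x ∈ carrier, x ∉ S' → ∀ y ∈ S', (r y x → r t x) ∧ (r x y → r x b)

/-- `b` is a *bottleneck* of `x`: `b > x`, the interval `[x,b]` is a chain, and every
`y > x` lies in `[x,b]` or satisfies `y > b`. -/
def IsBottleneck {α : Type*} [PartialOrder α] (x b : α) : Prop :=
  x < b ∧ IsChain (· ≤ ·) (Set.Icc x b) ∧ ∀ y, x < y → y ∈ Set.Icc x b ∨ b < y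

/-- A subset `C` of a partially ordered set is a *closure system* if for every `s`
the set of elements of `C` majorizing `s` has a least element. -/
def IsClosureSystem {α : Type*} [PartialOrder α] (C : Set α) : Prop :=
  ∀ s : α, ∃ m, IsLeast {c ∈ C | s ≤ c} m

/-- `C` is a closure system of the ordered set with carrier `carrier` and order
relation `r`. -/
def IsClosureSystemRel {β : Type*} (r : β → β → Prop) (carrier C : Set β) : Prop :=
  C ⊆ carrier ∧ ∀ s ∈ carrier, ∃ m, (m ∈ C ∧ r s m) ∧ ∀ c ∈ C, r s c → r m c

/-!
Above the least bottleneck `b` of `t = ⊤_{S'}` nothing branches off: every element strictly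
above `t` lies above `b`. Isolation of `S'` means that an element outside `S'` compares with `S'`
only through `⊥_{S'}` and `t`, so the closure of a point of `S` is read off either from the
preclosure system `C ∩ S'` inside `S'` or from the quotient. The one case in which neither
suffices directly is a point of `S'` whose closure in `S'` is the adjoined top `t ∉ C`; its
closure in `S` is then the least element of `C` above `t`, i.e. above `b`, which the quotient
provides as the closure of the class `{b}`.
-/

section Bottleneck

variable {α : Type*} [PartialOrder α] {x b c : α}

theorem IsBottleneck.of_lt_of_le (hb : IsBottleneck x b) (hxc : x < c) (hcb : c ≤ b) :
    IsBottleneck x c := by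
  refine ⟨hxc, hb.2.1.mono (Set.Icc_subset_Icc_right hcb), fun y hxy => ?_⟩
  rcases hb.2.2 y hxy with hy | hby
  · rcases hb.2.1.total hy ⟨hxc.le, hcb⟩ with hyc | hcy
    · exact Or.inl ⟨hxy.le, hyc⟩
    · rcases hcy.eq_or_lt with rfl | hcy
      · exact Or.inl ⟨hxy.le, le_rfl⟩
      · exact Or.inr hcy
  · exact Or.inr (hcb.trans_lt hby)

theorem IsBottleneck.le_of_lt (hb : IsBottleneck x b)
    (hleast : ∀ b' : α, IsBottleneck x b' → b ≤ b') (hxc : x < c) : b ≤ c := by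
  rcases hb.2.2 c hxc with ⟨-, hcb⟩ | hbc
  · exact hleast c (hb.of_lt_of_le hxc hcb)
  · exact hbc.le

end Bottleneck

section Quotient

variable {α : Type*} {S' : Set α} {x y : α}

theorem eqClass_of_mem (hx : x ∈ S') : eqClass S' x = S' := by
  ext y; simp [eqClass, hx]

theorem eqClass_of_notMem (hx : x ∉ S') : eqClass S' x = {x} := by
  ext y; simp [eqClass, hx]

theorem self_mem_quotClasses (hx : x ∈ S') : S' ∈ quotClasses S' :=
  ⟨x, eqClass_of_mem hx⟩

theorem singleton_mem_quotClasses (hx : x ∉ S') : {x} ∈ quotClasses S' :=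
  ⟨x, eqClass_of_notMem hx⟩

variable [PartialOrder α]

@[simp]
theorem qle_singleton_singleton : qle ({x} : Set α) {y} ↔ x ≤ y := by
  simp [qle]

theorem qle_self_of_mem (hx : x ∈ S') : qle S' S' :=
  ⟨x, hx, x, hx, le_rfl⟩

end Quotient

namespace IsIsolatedSuborder

variable {α : Type*} [PartialOrder α] {S' : Set α} {bot t x y : α}

theorem greatest_le (hS' : IsIsolatedSuborder S') (ht : IsGreatest S' t) (hx : x ∉ S')
    (hy : y ∈ S') (hyx : y ≤ x) : t ≤ x := by
  obtain ⟨_, t', -, ht', hiso⟩ := hS'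
  exact ht.unique ht' ▸ (hiso x hx y hy).1 hyx

theorem le_least (hS' : IsIsolatedSuborder S') (hbot : IsLeast S' bot) (hx : x ∉ S')
    (hy : y ∈ S') (hxy : x ≤ y) : x ≤ bot := by
  obtain ⟨bot', _, hbot', -, hiso⟩ := hS'
  exact hbot.unique hbot' ▸ (hiso x hx y hy).2 hxy

theorem qle_singleton_left_iff (hS' : IsIsolatedSuborder S') (hbot : IsLeast S' bot)
    (hx : x ∉ S') : qle {x} S' ↔ x ≤ bot := by
  refine ⟨?_, fun h => ⟨x, rfl, bot, hbot.1, h⟩⟩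
  rintro ⟨_, rfl, y, hy, hxy⟩
  exact hS'.le_least hbot hx hy hxy

theorem qle_singleton_right_iff (hS' : IsIsolatedSuborder S') (ht : IsGreatest S' t)
    (hx : x ∉ S') : qle S' {x} ↔ t ≤ x := by
  refine ⟨?_, fun h => ⟨t, ht.1, x, rfl, h⟩⟩
  rintro ⟨y, hy, _, rfl, hyx⟩
  exact hS'.greatest_le ht hx hy hyx

theorem qle_eqClass_singleton_iff (hS' : IsIsolatedSuborder S') (ht : IsGreatest S' t)
    (hx : x ∉ S') : qle (eqClass S' y) {x} ↔ y ≤ x := by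
  by_cases hy : y ∈ S'
  · rw [eqClass_of_mem hy, hS'.qle_singleton_right_iff ht hx]
    exact ⟨(ht.2 hy).trans, hS'.greatest_le ht hx hy⟩
  · rw [eqClass_of_notMem hy, qle_singleton_singleton]

end IsIsolatedSuborder

section ClosureSystem

variable {α : Type*} [PartialOrder α]

theorem isClosureSystemRel_le_iff {X C : Set α} :
    IsClosureSystemRel (· ≤ ·) X C ↔
      C ⊆ X ∧ ∀ s ∈ X, ∃ m, IsLeast {c ∈ C | s ≤ c} m := by
  simp only [IsClosureSystemRel, IsLeast, lowerBounds, Set.mem_ofPred_eq, and_imp]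

theorem exists_isLeast_iff_of_image {β : Type*} (r : β → β → Prop) (f : α → β) (E : Set α)
    (s : α) (p : β) (hp : ∀ c ∈ E, r p (f c) ↔ s ≤ c)
    (hf : ∀ c ∈ E, ∀ c' ∈ E, r (f c) (f c') ↔ c ≤ c') :
    (∃ m, IsLeast {c ∈ E | s ≤ c} m) ↔
      ∃ M, (M ∈ f '' E ∧ r p M) ∧ ∀ B ∈ f '' E, r p B → r M B := by
  constructor
  · rintro ⟨m, ⟨hmE, hsm⟩, hmin⟩
    refine ⟨f m, ⟨⟨m, hmE, rfl⟩, (hp m hmE).2 hsm⟩, ?_⟩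
    rintro _ ⟨c, hcE, rfl⟩ hpc
    exact (hf m hmE c hcE).2 (hmin ⟨hcE, (hp c hcE).1 hpc⟩)
  · rintro ⟨_, ⟨⟨m, hmE, rfl⟩, hpm⟩, hmin⟩
    refine ⟨m, ⟨hmE, (hp m hmE).1 hpm⟩, fun c ⟨hcE, hsc⟩ => ?_⟩
    exact (hf m hmE c hcE).1 (hmin (f c) ⟨c, hcE, rfl⟩ ((hp c hcE).2 hsc))

theorem IsLeast.mem_of_union_upperBound {D : Set α} {s t m d : α}
    (hm : IsLeast {c ∈ D ∪ {t} | s ≤ c} m) (ht : t ∈ upperBounds D) (hd : d ∈ D)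
    (hsd : s ≤ d) : m ∈ D := by
  rcases hm.1.1 with hmD | rfl
  · exact hmD
  · exact le_antisymm (ht hd) (hm.2 ⟨Or.inl hd, hsd⟩) ▸ hd

end ClosureSystem

section Isolated

variable {α : Type*} [PartialOrder α] {S' C : Set α} {bot t : α}

theorem isClosureSystem_iff_quotient_of_disjoint (hS' : IsIsolatedSuborder S')
    (ht : IsGreatest S' t) (hC : Disjoint C S') :
    IsClosureSystem C ↔
      IsClosureSystemRel qle (quotClasses S') ((fun c => ({c} : Set α)) '' C) := by
  have hCS : ∀ c ∈ C, c ∉ S' := fun c hc => hC.notMem_of_mem_left hc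
  have hsub : (fun c => ({c} : Set α)) '' C ⊆ quotClasses S' := by
    rintro _ ⟨c, hc, rfl⟩
    exact singleton_mem_quotClasses (hCS c hc)
  rw [IsClosureSystemRel, and_iff_right hsub, quotClasses, Set.forall_mem_range,
    IsClosureSystem]
  refine forall_congr' fun s => exists_isLeast_iff_of_image qle _ C s _
    (fun c hc => hS'.qle_eqClass_singleton_iff ht (hCS c hc)) fun _ _ _ _ => ?_
  exact qle_singleton_singleton

theorem IsClosureSystem.preclosure_inter (hC : IsClosureSystem C)
    (hS' : IsIsolatedSuborder S') (hbot : IsLeast S' bot) (ht : IsGreatest S' t) :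
    IsClosureSystemRel (· ≤ ·) S' (C ∩ S' ∪ {t}) := by
  refine isClosureSystemRel_le_iff.2 ⟨Set.union_subset Set.inter_subset_right
    (Set.singleton_subset_iff.2 ht.1), fun s hs => ?_⟩
  obtain ⟨m, ⟨hmC, hsm⟩, hmin⟩ := hC s
  by_cases hm : m ∈ S'
  · refine ⟨m, ⟨Or.inl ⟨hmC, hm⟩, hsm⟩, ?_⟩
    rintro c ⟨hc | rfl, hsc⟩
    exacts [hmin ⟨hc.1, hsc⟩, ht.2 hm]
  · refine ⟨t, ⟨Or.inr rfl, ht.2 hs⟩, ?_⟩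
    rintro c ⟨hc | rfl, hsc⟩
    · have hmbot : m ≤ bot := hS'.le_least hbot hm hc.2 (hmin ⟨hc.1, hsc⟩)
      exact absurd (le_antisymm hmbot ((hbot.2 hs).trans hsm) ▸ hbot.1) hm
    · exact le_rfl

theorem IsClosureSystem.quotient_insert (hC : IsClosureSystem C)
    (hS' : IsIsolatedSuborder S') (hbot : IsLeast S' bot) (ht : IsGreatest S' t)
    (hD : (C ∩ S').Nonempty) :
    IsClosureSystemRel qle (quotClasses S')
      (insert S' ((fun c => ({c} : Set α)) '' (C \ S'))) := by
  obtain ⟨c₀, hc₀C, hc₀S⟩ := hD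
  refine ⟨?_, ?_⟩
  · rintro _ (rfl | ⟨c, hc, rfl⟩)
    exacts [self_mem_quotClasses hc₀S, singleton_mem_quotClasses hc.2]
  rintro _ ⟨s, rfl⟩
  by_cases hs : s ∈ S'
  · rw [eqClass_of_mem hs]
    exact ⟨S', ⟨Set.mem_insert _ _, qle_self_of_mem hs⟩, fun _ _ h => h⟩
  rw [eqClass_of_notMem hs]
  obtain ⟨m, ⟨hmC, hsm⟩, hmin⟩ := hC s
  by_cases hm : m ∈ S'
  · refine ⟨S', ⟨Set.mem_insert _ _, ⟨s, rfl, m, hm, hsm⟩⟩, ?_⟩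
    rintro _ (rfl | ⟨c, hc, rfl⟩) hsc
    · exact qle_self_of_mem hm
    · rw [hS'.qle_singleton_right_iff ht hc.2]
      exact hS'.greatest_le ht hc.2 hm (hmin ⟨hc.1, qle_singleton_singleton.1 hsc⟩)
  · refine ⟨{m}, ⟨Set.mem_insert_of_mem _ ⟨m, ⟨hmC, hm⟩, rfl⟩,
      qle_singleton_singleton.2 hsm⟩, ?_⟩
    rintro _ (rfl | ⟨c, hc, rfl⟩) hsc
    · rw [hS'.qle_singleton_left_iff hbot hs] at hsc
      exact ⟨m, rfl, c₀, hc₀S, hmin ⟨hc₀C, hsc.trans (hbot.2 hc₀S)⟩⟩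
    · exact qle_singleton_singleton.2 (hmin ⟨hc.1, qle_singleton_singleton.1 hsc⟩)

/-- The two cases are the quotient closure of `{x}` being `S'` or being `{m}`. -/
theorem le_least_or_exists_isLeast_of_quotient (hS' : IsIsolatedSuborder S')
    (hbot : IsLeast S' bot) (ht : IsGreatest S' t)
    (hquot : IsClosureSystemRel qle (quotClasses S')
      (insert S' ((fun c => ({c} : Set α)) '' (C \ S')))) {x : α} (hx : x ∉ S') :
    (x ≤ bot ∧ ∀ c ∈ C \ S', x ≤ c → t ≤ c) ∨ ∃ m, IsLeast {c ∈ C | x ≤ c} m := by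
  obtain ⟨M, ⟨hM | ⟨m, hm, rfl⟩, hxM⟩, hmin⟩ := hquot.2 _ ⟨x, rfl⟩
  all_goals rw [eqClass_of_notMem hx] at hxM hmin
  · subst hM
    refine Or.inl ⟨(hS'.qle_singleton_left_iff hbot hx).1 hxM, fun c hc hxc => ?_⟩
    have := hmin {c} (Set.mem_insert_of_mem _ ⟨c, hc, rfl⟩) (qle_singleton_singleton.2 hxc)
    exact (hS'.qle_singleton_right_iff ht hc.2).1 this
  · refine Or.inr ⟨m, ⟨hm.1, qle_singleton_singleton.1 hxM⟩, fun c ⟨hcC, hxc⟩ => ?_⟩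
    by_cases hc : c ∈ S'
    · have hxS : qle {x} S' := ⟨x, rfl, c, hc, hxc⟩
      have hmS := hmin S' (Set.mem_insert _ _) hxS
      exact ((hS'.qle_singleton_left_iff hbot hm.2).1 hmS).trans (hbot.2 hc)
    · exact qle_singleton_singleton.1
        (hmin {c} (Set.mem_insert_of_mem _ ⟨c, ⟨hcC, hc⟩, rfl⟩) (qle_singleton_singleton.2 hxc))

variable (hS' : IsIsolatedSuborder S') (hbot : IsLeast S' bot) (ht : IsGreatest S' t)
  (hpre : ∀ s ∈ S', ∃ m, IsLeast {c ∈ C ∩ S' ∪ {t} | s ≤ c} m)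
  (hquot : IsClosureSystemRel qle (quotClasses S')
    (insert S' ((fun c => ({c} : Set α)) '' (C \ S'))))
include hS' hbot ht hpre hquot

theorem exists_isLeast_of_preclosure_of_quotient_of_mem {b : α} (hb : IsBottleneck t b)
    (hbleast : ∀ b' : α, IsBottleneck t b' → b ≤ b') {s : α} (hs : s ∈ S') :
    ∃ m, IsLeast {c ∈ C | s ≤ c} m := by
  obtain ⟨m, hm⟩ := hpre s hs
  have hmt : m ≤ t := by
    rcases hm.1.1 with hmD | rfl
    exacts [ht.2 hmD.2, le_rfl]
  by_cases hmC : m ∈ C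
  · refine ⟨m, ⟨hmC, hm.1.2⟩, fun c ⟨hcC, hsc⟩ => ?_⟩
    by_cases hc : c ∈ S'
    · exact hm.2 ⟨Or.inl ⟨hcC, hc⟩, hsc⟩
    · exact hmt.trans (hS'.greatest_le ht hc hs hsc)
  obtain rfl : m = t := hm.1.1.resolve_left fun h => hmC h.1
  have hbS : b ∉ S' := fun h => hb.1.not_ge (ht.2 h)
  obtain ⟨hbbot, -⟩ | ⟨m, hm'⟩ :=
    le_least_or_exists_isLeast_of_quotient hS' hbot ht hquot hbS
  · exact absurd (hbbot.trans (hbot.2 ht.1)) hb.1.not_ge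
  have hUb : {c ∈ C | s ≤ c} = {c ∈ C | b ≤ c} := by
    ext c
    refine and_congr_right fun hcC =>
      ⟨fun hsc => ?_, fun hbc => (ht.2 hs).trans (hb.1.le.trans hbc)⟩
    have hc : c ∉ S' := fun hc =>
      hmC (hm.mem_of_union_upperBound (fun c hc => ht.2 hc.2) ⟨hcC, hc⟩ hsc).1
    refine hb.le_of_lt hbleast ((hS'.greatest_le ht hc hs hsc).lt_of_ne ?_)
    rintro rfl
    exact hmC hcC
  exact ⟨m, hUb ▸ hm'⟩

theorem exists_isLeast_of_preclosure_of_quotient_of_notMem (hD : (C ∩ S').Nonempty) {s : α}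
    (hs : s ∉ S') : ∃ m, IsLeast {c ∈ C | s ≤ c} m := by
  obtain ⟨hsbot, hE⟩ | hleast :=
    le_least_or_exists_isLeast_of_quotient hS' hbot ht hquot hs
  · obtain ⟨m, hm⟩ := hpre bot hbot.1
    obtain ⟨c₀, hc₀⟩ := hD
    have hmD : m ∈ C ∩ S' :=
      hm.mem_of_union_upperBound (fun c hc => ht.2 hc.2) hc₀ (hbot.2 hc₀.2)
    refine ⟨m, ⟨hmD.1, hsbot.trans (hbot.2 hmD.2)⟩, fun c ⟨hcC, hsc⟩ => ?_⟩
    by_cases hc : c ∈ S'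
    · exact hm.2 ⟨Or.inl ⟨hcC, hc⟩, hbot.2 hc⟩
    · exact (ht.2 hmD.2).trans (hE c ⟨hcC, hc⟩ hsc)
  · exact hleast

end Isolated

/-- Theorem 12 (closures and isolated suborders with bottleneck): let `S'` be an
isolated suborder whose greatest element `t` has a least bottleneck `b`, and let
`C ⊆ S`. If `C ∩ S' ≠ ∅`, then `C` is a closure system of `(S,≤)` iff `C ∩ S'` is a
nonempty preclosure system of `S'` with the induced order and
`{{c} | c ∈ C \ S'} ∪ {S'}` is a closure system of the quotient. If `C ∩ S' = ∅`,
then `C` is a closure system of `(S,≤)` iff `{{c} | c ∈ C}` is a closure system of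
the quotient. -/
theorem closureSystem_iff_quotient_bottleneck {α : Type*} [PartialOrder α]
    (S' : Set α) (hS' : IsIsolatedSuborder S')
    (t b : α) (ht : IsGreatest S' t)
    (hb : IsBottleneck t b) (hbleast : ∀ b' : α, IsBottleneck t b' → b ≤ b')
    (C : Set α) :
    (C ∩ S' ≠ ∅ →
      (IsClosureSystem C ↔
        ((C ∩ S' ≠ ∅ ∧ IsClosureSystemRel (· ≤ ·) S' ((C ∩ S') ∪ {t})) ∧
          IsClosureSystemRel qle (quotClasses S')
            (insert S' ((fun c => ({c} : Set α)) '' (C \ S')))))) ∧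
    (C ∩ S' = ∅ →
      (IsClosureSystem C ↔
        IsClosureSystemRel qle (quotClasses S') ((fun c => ({c} : Set α)) '' C))) := by
  obtain ⟨bot, -, hbot, -⟩ := id hS'
  refine ⟨fun hD => ⟨fun hC => ?_, fun ⟨⟨_, hpre⟩, hquot⟩ => ?_⟩, fun hD =>
    isClosureSystem_iff_quotient_of_disjoint hS' ht (Set.disjoint_iff_inter_eq_empty.2 hD)⟩
  · exact ⟨⟨hD, hC.preclosure_inter hS' hbot ht⟩,
      hC.quotient_insert hS' hbot ht (Set.nonempty_iff_ne_empty.2 hD)⟩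
  · have hpre := (isClosureSystemRel_le_iff.1 hpre).2
    intro s
    by_cases hs : s ∈ S'
    · exact exists_isLeast_of_preclosure_of_quotient_of_mem hS' hbot ht hpre hquot hb hbleast hs
    · exact exists_isLeast_of_preclosure_of_quotient_of_notMem hS' hbot ht hpre hquot
        (Set.nonempty_iff_ne_empty.2 hD) hs
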